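/- Seed sets avoiding a fully-dependent added node transfer back to the original network: let (V, W, b) be an influence network, v ∉ V, and let (V ∪ {v}, W', b') extend it (W' agrees with W on V × V, b' agrees with b on V). Let N_in = {w ∈ V : W'(w,v) > 0} and N_out = {w ∈ V : W'(v,w) > 0}. Assume (i) ∑_{w ∈ N'} W'(w,v) < b'(v) ≤ ∑_{w ∈ N_in} W'(w,v) for every proper subset N' ⊊ N_in, (ii) N_out ⊆ N_in, and (iii) W'(v,w) < b'(w) for every w ∈ N_out. Then every seed set S ⊆ V with v ∉ S that achieves full influenceability in (V ∪ {v}, W', b') also achieves full influenceability in (V, W, b). -/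

import Mathlib

/-!
Influence barricade model: a finite vertex set `V : Finset ι`, edge weights
`W : ι → ι → ℝ` (an edge `u → v` exists iff `W u v > 0`), and barricade
factors `b : ι → ℝ`.  For a seed set `S ⊆ V`, the diffusion process is
`A 0 = S` and `A (t+1) = A t ∪ {u ∈ V : ∑ v ∈ A t, W v u ≥ b u}`.
-/

open Finset

open Classical in
/-- One step of the diffusion process under the influence barricade model. -/
noncomputable def diffStep {ι : Type*} [DecidableEq ι] (V : Finset ι)
    (W : ι → ι → ℝ) (b : ι → ℝ) (A : Finset ι) : Finset ι :=
  A ∪ V.filter (fun u => b u ≤ ∑ v ∈ A, W v u)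

/-- `activeSet V W b S t` is the set `A_t(S)` of nodes active at time `t`. -/
noncomputable def activeSet {ι : Type*} [DecidableEq ι] (V : Finset ι)
    (W : ι → ι → ℝ) (b : ι → ℝ) (S : Finset ι) : ℕ → Finset ι
  | 0 => S
  | t + 1 => diffStep V W b (activeSet V W b S t)

/-- The final active set `A(S) = A_{|V|}(S)`. -/
noncomputable def finalActive {ι : Type*} [DecidableEq ι] (V : Finset ι)
    (W : ι → ι → ℝ) (b : ι → ℝ) (S : Finset ι) : Finset ι :=
  activeSet V W b S V.card

/-- `S` achieves full influenceability: every node is eventually active. -/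
def FullInf {ι : Type*} [DecidableEq ι] (V : Finset ι) (W : ι → ι → ℝ)
    (b : ι → ℝ) (S : Finset ι) : Prop :=
  finalActive V W b S = V

/-- `σ(S)`: the number of nodes active at the end of the influence process. -/
noncomputable def sigmaInf {ι : Type*} [DecidableEq ι] (V : Finset ι)
    (W : ι → ι → ℝ) (b : ι → ℝ) (S : Finset ι) : ℕ :=
  (finalActive V W b S).card

/-- The minimum seed number: the least cardinality of a seed set achieving
full influenceability. -/
noncomputable def minSeed {ι : Type*} [DecidableEq ι] (V : Finset ι)
    (W : ι → ι → ℝ) (b : ι → ℝ) : ℕ :=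
  sInf {n | ∃ S : Finset ι, S ⊆ V ∧ S.card = n ∧ FullInf V W b S}

/-! A node added to the network can only be activated after all of its in-neighbours, and by (ii)
it has no out-neighbours outside them. So while the added node `v` is inactive it contributes
nothing to any threshold sum, and once it is active every node it could help is already active.
Hence, by induction on time, the nodes of `V` active in the extended network are active in the
original one, and full influenceability transfers back. -/

section Diffusion

variable {ι : Type*} [DecidableEq ι] {V : Finset ι} {W : ι → ι → ℝ} {b : ι → ℝ} {S : Finset ι}

theorem subset_diffStep (A : Finset ι) : A ⊆ diffStep V W b A :=
  subset_union_left

theorem diffStep_subset {A : Finset ι} (hA : A ⊆ V) : diffStep V W b A ⊆ V :=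
  union_subset hA (filter_subset _ _)

theorem activeSet_subset (hS : S ⊆ V) : ∀ t, activeSet V W b S t ⊆ V
  | 0 => hS
  | t + 1 => diffStep_subset (activeSet_subset hS t)

theorem activeSet_monotone : Monotone (activeSet V W b S) :=
  monotone_nat_of_le_succ fun t => subset_diffStep (activeSet V W b S t)

theorem activeSet_add_eq_of_succ_eq {s : ℕ}
    (h : activeSet V W b S (s + 1) = activeSet V W b S s) :
    ∀ k, activeSet V W b S (s + k) = activeSet V W b S s
  | 0 => rfl
  | k + 1 => by
    change diffStep V W b (activeSet V W b S (s + k)) = _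
    rw [activeSet_add_eq_of_succ_eq h k]
    exact h

/-- Pigeonhole: a strictly increasing chain of subsets of `V` has at most `#V + 1` terms. -/
theorem exists_activeSet_succ_eq (hS : S ⊆ V) :
    ∃ s ≤ #V, activeSet V W b S (s + 1) = activeSet V W b S s := by
  by_contra! hstrict
  have hgrow : ∀ s ≤ #V + 1, s ≤ #(activeSet V W b S s) := by
    intro s
    induction s with
    | zero => intro _; exact Nat.zero_le _
    | succ s ih =>
      intro hs
      have hssub : activeSet V W b S s ⊂ activeSet V W b S (s + 1) :=
        ssubset_of_subset_of_ne (activeSet_monotone s.le_succ) (hstrict s (by omega)).symm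
      have := card_lt_card hssub
      have := ih (by omega)
      omega
  have := card_le_card (activeSet_subset (W := W) (b := b) hS (#V + 1))
  have := hgrow (#V + 1) le_rfl
  omega

theorem activeSet_subset_finalActive (hS : S ⊆ V) (t : ℕ) :
    activeSet V W b S t ⊆ finalActive V W b S := by
  obtain ⟨s, hs, hfix⟩ := exists_activeSet_succ_eq (W := W) (b := b) hS
  have hfinal : finalActive V W b S = activeSet V W b S s := by
    rw [finalActive, ← Nat.add_sub_cancel' hs]
    exact activeSet_add_eq_of_succ_eq hfix (#V - s)
  calc activeSet V W b S t ⊆ activeSet V W b S (s + t) := activeSet_monotone (by omega)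
    _ = finalActive V W b S := by rw [activeSet_add_eq_of_succ_eq hfix, hfinal]

theorem fullInf_of_subset_activeSet (hS : S ⊆ V) {t : ℕ} (h : V ⊆ activeSet V W b S t) :
    FullInf V W b S :=
  Subset.antisymm (activeSet_subset hS #V) (h.trans (activeSet_subset_finalActive hS t))

end Diffusion

theorem subset_of_le_sum_of_forall_ssubset_sum_lt {ι : Type*} {N A : Finset ι} {f : ι → ℝ}
    {c : ℝ} (hzero : ∀ u ∈ A, u ∉ N → f u = 0) (hmin : ∀ N' ⊂ N, ∑ u ∈ N', f u < c)
    (hle : c ≤ ∑ u ∈ A, f u) : N ⊆ A := by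
  classical
  have hsum : ∑ u ∈ A ∩ N, f u = ∑ u ∈ A, f u :=
    sum_subset inter_subset_left fun u hu hnot =>
      hzero u hu fun huN => hnot (mem_inter.2 ⟨hu, huN⟩)
  by_contra hnot
  have hssub : A ∩ N ⊂ N :=
    ssubset_of_subset_of_ne inter_subset_right fun heq => hnot (heq ▸ inter_subset_left)
  have := hmin _ hssub
  linarith

theorem sum_le_sum_of_erase_subset {ι : Type*} [DecidableEq ι] {A' A : Finset ι} {v : ι}
    {f g : ι → ℝ} (hsub : A'.erase v ⊆ A) (hfg : ∀ u ∈ A'.erase v, f u = g u)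
    (hv : v ∈ A' → f v = 0) (hg : ∀ u ∈ A, 0 ≤ g u) :
    ∑ u ∈ A', f u ≤ ∑ u ∈ A, g u := by
  have hf : ∑ u ∈ A', f u = ∑ u ∈ A'.erase v, f u := by
    by_cases hvA : v ∈ A'
    · exact (sum_erase A' (hv hvA)).symm
    · rw [erase_eq_of_notMem hvA]
  calc ∑ u ∈ A', f u = ∑ u ∈ A'.erase v, g u := hf.trans (sum_congr rfl hfg)
    _ ≤ ∑ u ∈ A, g u := sum_le_sum_of_subset_of_nonneg hsub fun u hu _ => hg u hu

section AddedNode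

variable {ι : Type*} [DecidableEq ι] {V : Finset ι} {v : ι} {W W' : ι → ι → ℝ} {b b' : ι → ℝ}
  {Nin A A' : Finset ι}

theorem erase_diffStep_subset_diffStep (hW : ∀ u w, 0 ≤ W u w)
    (hagreeW : ∀ u w, u ∈ V → w ∈ V → W' u w = W u w) (hagreeb : ∀ u ∈ V, b' u = b u)
    (hout : ∀ w ∈ V, w ∉ Nin → W' v w = 0) (hA : A ⊆ V) (hsub : A'.erase v ⊆ A)
    (hNin : v ∈ A' → Nin ⊆ A') :
    (diffStep (insert v V) W' b' A').erase v ⊆ diffStep V W b A := by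
  intro x hx
  obtain ⟨hxv, hx⟩ := mem_erase.1 hx
  rcases mem_union.1 hx with hxA' | hxnew
  · exact subset_diffStep A (hsub (mem_erase.2 ⟨hxv, hxA'⟩))
  obtain ⟨hxV, hxsum⟩ := mem_filter.1 hxnew
  replace hxV : x ∈ V := (mem_insert.1 hxV).resolve_left hxv
  by_cases hhelped : v ∈ A' ∧ x ∈ Nin
  · exact subset_diffStep A (hsub (mem_erase.2 ⟨hxv, hNin hhelped.1 hhelped.2⟩))
  have hvx : v ∈ A' → W' v x = 0 := fun hvA => hout x hxV fun hxN => hhelped ⟨hvA, hxN⟩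
  refine mem_union_right _ (mem_filter.2 ⟨hxV, ?_⟩)
  calc b x = b' x := (hagreeb x hxV).symm
    _ ≤ ∑ u ∈ A', W' u x := hxsum
    _ ≤ ∑ u ∈ A, W u x :=
      sum_le_sum_of_erase_subset hsub (fun u hu => hagreeW u x (hA (hsub hu)) hxV) hvx
        fun u _ => hW u x

theorem subset_diffStep_of_mem_diffStep (hin : ∀ u ∈ V, u ∉ Nin → W' u v = 0)
    (hmin : ∀ N' ⊂ Nin, ∑ w ∈ N', W' w v < b' v) (hA' : A' ⊆ insert v V)
    (hNin : v ∈ A' → Nin ⊆ A') (hv : v ∈ diffStep (insert v V) W' b' A') :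
    Nin ⊆ diffStep (insert v V) W' b' A' := by
  refine Subset.trans ?_ (subset_diffStep A')
  by_cases hvA : v ∈ A'
  · exact hNin hvA
  have hA'V : A' ⊆ V := fun u hu =>
    (mem_insert.1 (hA' hu)).resolve_left fun huv => hvA (huv ▸ hu)
  have hthreshold : b' v ≤ ∑ u ∈ A', W' u v :=
    (mem_filter.1 ((mem_union.1 hv).resolve_left hvA)).2
  exact subset_of_le_sum_of_forall_ssubset_sum_lt (fun u hu => hin u (hA'V hu)) hmin hthreshold

theorem erase_activeSet_subset_activeSet {S : Finset ι} (hS : S ⊆ V) (hvS : v ∉ S)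
    (hW : ∀ u w, 0 ≤ W u w) (hagreeW : ∀ u w, u ∈ V → w ∈ V → W' u w = W u w)
    (hagreeb : ∀ u ∈ V, b' u = b u) (hin : ∀ u ∈ V, u ∉ Nin → W' u v = 0)
    (hout : ∀ w ∈ V, w ∉ Nin → W' v w = 0) (hmin : ∀ N' ⊂ Nin, ∑ w ∈ N', W' w v < b' v) :
    ∀ t, (activeSet (insert v V) W' b' S t).erase v ⊆ activeSet V W b S t ∧
      (v ∈ activeSet (insert v V) W' b' S t → Nin ⊆ activeSet (insert v V) W' b' S t)
  | 0 => ⟨erase_subset v S, fun hv => absurd hv hvS⟩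
  | t + 1 =>
    have ⟨hsub, hNin⟩ :=
      erase_activeSet_subset_activeSet hS hvS hW hagreeW hagreeb hin hout hmin t
    have hA' := activeSet_subset (W := W') (b := b') (hS.trans (subset_insert v V)) t
    ⟨erase_diffStep_subset_diffStep hW hagreeW hagreeb hout (activeSet_subset hS t) hsub hNin,
      subset_diffStep_of_mem_diffStep hin hmin hA' hNin⟩

end AddedNode

theorem fullInf_transfer_back_added_node_general {ι : Type*} [DecidableEq ι]
    (V : Finset ι) (v : ι) (hv : v ∉ V)
    (W W' : ι → ι → ℝ) (b b' : ι → ℝ)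
    (hW : ∀ u w, 0 ≤ W u w)
    (hW' : ∀ u w, 0 ≤ W' u w)
    (hagreeW : ∀ u w : ι, u ∈ V → w ∈ V → W' u w = W u w)
    (hagreeb : ∀ u ∈ V, b' u = b u)
    (Nin Nout : Finset ι)
    (hNin : ∀ w : ι, w ∈ Nin ↔ w ∈ V ∧ 0 < W' w v)
    (hNout : ∀ w : ι, w ∈ Nout ↔ w ∈ V ∧ 0 < W' v w)
    -- (i): no proper subset of `N_in` suffices to activate `v`, but `N_in` does
    (hi₁ : ∀ N' : Finset ι, N' ⊂ Nin → ∑ w ∈ N', W' w v < b' v)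
    -- (ii): the out-neighbors of `v` are among its in-neighbors
    (hii : Nout ⊆ Nin)
    (S : Finset ι) (hS : S ⊆ V) (hvS : v ∉ S)
    (hfull : FullInf (insert v V) W' b' S) :
    FullInf V W b S := by
  have hin : ∀ u ∈ V, u ∉ Nin → W' u v = 0 := fun u hu huN =>
    (hW' u v).antisymm' (not_lt.1 fun hpos => huN ((hNin u).2 ⟨hu, hpos⟩))
  have hout : ∀ w ∈ V, w ∉ Nin → W' v w = 0 := fun w hw hwN =>
    (hW' v w).antisymm' (not_lt.1 fun hpos => hwN (hii ((hNout w).2 ⟨hw, hpos⟩)))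
  have hfinal : activeSet (insert v V) W' b' S (#V + 1) = insert v V := by
    rw [← card_insert_of_notMem hv]
    exact hfull
  have hsub := (erase_activeSet_subset_activeSet hS hvS hW hagreeW hagreeb hin hout hi₁ (#V + 1)).1
  rw [hfinal, erase_insert hv] at hsub
  exact fullInf_of_subset_activeSet hS hsub

/-- seed sets avoiding a fully-dependent added node transfer
back to the original network. -/
theorem fullInf_transfer_back_added_node {ι : Type*} [DecidableEq ι]
    (V : Finset ι) (v : ι) (hv : v ∉ V)
    (W W' : ι → ι → ℝ) (b b' : ι → ℝ)
    (hW : ∀ u w, 0 ≤ W u w) (hb : ∀ u, 0 ≤ b u)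
    (hW' : ∀ u w, 0 ≤ W' u w) (hb' : ∀ u, 0 ≤ b' u)
    (hagreeW : ∀ u w : ι, u ∈ V → w ∈ V → W' u w = W u w)
    (hagreeb : ∀ u ∈ V, b' u = b u)
    (Nin Nout : Finset ι)
    (hNin : ∀ w : ι, w ∈ Nin ↔ w ∈ V ∧ 0 < W' w v)
    (hNout : ∀ w : ι, w ∈ Nout ↔ w ∈ V ∧ 0 < W' v w)
    -- (i): no proper subset of `N_in` suffices to activate `v`, but `N_in` does
    (hi₁ : ∀ N' : Finset ι, N' ⊂ Nin → ∑ w ∈ N', W' w v < b' v)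
    (hi₂ : b' v ≤ ∑ w ∈ Nin, W' w v)
    -- (ii): the out-neighbors of `v` are among its in-neighbors
    (hii : Nout ⊆ Nin)
    -- (iii): `v` alone cannot activate any of its out-neighbors
    (hiii : ∀ w ∈ Nout, W' v w < b' w)
    (S : Finset ι) (hS : S ⊆ V) (hvS : v ∉ S)
    (hfull : FullInf (insert v V) W' b' S) :
    FullInf V W b S :=
  fullInf_transfer_back_added_node_general V v hv W W' b b' hW hW' hagreeW hagreeb Nin Nout hNin
    hNout hi₁ hii S hS hvS hfull
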